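/- Let (R, μ) be a commutative ring with a negative pseudovaluation and let A be an R-algebra which is free of finite rank n as an R-module. Let τ be an admissible pseudovaluation on the finitely generated R-algebra A. Fix an R-module isomorphism φ : Rⁿ ≅ A and let μⁿ denote the function on A obtained by transporting (a₁, …, aₙ) ↦ min_i μ(a_i) along φ. Then τ is linearly equivalent to μⁿ. -/

import Mathlib

/-!
Write `μⁿ` for the order of the coordinates in the basis given by `φ`, and `ν` for the weighted
degree pseudovaluation of which `τ` is the quotient under `π`.

Lower bound: lift the basis vectors through `π` to polynomials `gᵢ`. Then `∑ aᵢ gᵢ` lifts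
`a = ∑ aᵢ eᵢ`, so `τ a ≥ minᵢ (μ aᵢ + ν gᵢ) ≥ μⁿ a - K`.

Upper bound: `μⁿ` is supermultiplicative up to an additive constant, hence
`μⁿ (π Tᵏ) ≥ -O - M |k|`. As `μ c ≤ 0` for `c ≠ 0` and the weights `dⱼ` are positive, a
constant `C ≥ 1` with `M ≤ C dⱼ` gives `μⁿ (π (c Tᵏ)) ≥ C (μ c - ∑ kⱼ dⱼ) - O`, so
`μⁿ (π f) ≥ C ν f - O` for every polynomial `f`; taking the supremum over the lifts of `a`
gives `C τ a - O ≤ μⁿ a`.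
-/

open scoped Classical

noncomputable section

/-- A pseudovaluation on a commutative ring `A`: a function `ν : A → ℝ ∪ {±∞}` with
`ν 0 = ∞`, `ν 1 = 0`, `ν (a - b) ≥ min (ν a) (ν b)`, and `ν (a*b) ≥ ν a + ν b`
whenever `ν a ≠ -∞` and `ν b ≠ -∞`. -/
structure IsPseudovaluation {A : Type*} [CommRing A] (ν : A → EReal) : Prop where
  map_zero : ν 0 = ⊤
  map_one : ν 1 = 0
  min_le_sub : ∀ a b : A, min (ν a) (ν b) ≤ ν (a - b)
  add_le_mul : ∀ a b : A, ν a ≠ ⊥ → ν b ≠ ⊥ → ν a + ν b ≤ ν (a * b)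

/-- A proper pseudovaluation never takes the value `-∞`. -/
def IsProperPV {A : Type*} [CommRing A] (ν : A → EReal) : Prop :=
  IsPseudovaluation ν ∧ ∀ a : A, ν a ≠ ⊥

/-- A negative pseudovaluation is proper and satisfies `ν a ≤ 0` for `a ≠ 0`. -/
def IsNegativePV {A : Type*} [CommRing A] (ν : A → EReal) : Prop :=
  IsPseudovaluation ν ∧ (∀ a : A, ν a ≠ ⊥) ∧ ∀ a : A, a ≠ 0 → ν a ≤ 0

/-- `f` is localizing with respect to `ν` if there are `C > 0`, `D ≥ 0` with
`ν (fⁿ x) ≤ C · ν x + n D` for all `n` and `x`. -/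
def IsLocalizing {A : Type*} [CommRing A] (ν : A → EReal) (f : A) : Prop :=
  ∃ C D : ℝ, 0 < C ∧ 0 ≤ D ∧ ∀ (n : ℕ) (x : A),
    ν (f ^ n * x) ≤ (C : EReal) * ν x + (((n : ℝ) * D : ℝ) : EReal)

/-- Two functions `A → ℝ ∪ {±∞}` are linearly equivalent if they dominate each other
up to positive multiplicative and nonnegative additive constants. -/
def LinearlyEquivalent {A : Type*} (ν₁ ν₂ : A → EReal) : Prop :=
  ∃ c₁ c₂ d₁ d₂ : ℝ, 0 < c₁ ∧ 0 < c₂ ∧ 0 ≤ d₁ ∧ 0 ≤ d₂ ∧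
    (∀ a : A, (c₂ : EReal) * ν₂ a - (d₂ : EReal) ≤ ν₁ a) ∧
    (∀ a : A, (c₁ : EReal) * ν₁ a - (d₁ : EReal) ≤ ν₂ a)

/-- The weighted degree pseudovaluation on a multivariate polynomial ring:
`ν (Σ_k c_k T^k) = inf_k { μ(c_k) - Σ_i k_i d_i }`. -/
def weightedDegPV {R : Type*} [CommRing R] (μ : R → EReal) {m : ℕ} (d : Fin m → ℝ)
    (f : MvPolynomial (Fin m) R) : EReal :=
  ⨅ k : Fin m →₀ ℕ, (μ (MvPolynomial.coeff k f) - ((∑ i, (k i : ℝ) * d i : ℝ) : EReal))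

/-- A pseudovaluation `τ` on an `R`-algebra `B` is admissible (relative to `μ` on `R`)
if it is the quotient of a weighted degree pseudovaluation under some surjection
from a polynomial ring. -/
def IsAdmissiblePV {R B : Type*} [CommRing R] [CommRing B] [Algebra R B]
    (μ : R → EReal) (τ : B → EReal) : Prop :=
  ∃ (m : ℕ) (π : MvPolynomial (Fin m) R →ₐ[R] B) (d : Fin m → ℝ),
    Function.Surjective π ∧ (∀ i, 0 < d i) ∧
    ∀ b : B, τ b = ⨆ (f : MvPolynomial (Fin m) R) (_ : π f = b), weightedDegPV μ d f

/-- The pseudovaluation `μ (Σ_i a_i X^i) = min_i { ν(a_i) - i·d }` on `A[X]`. -/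
def polyPV {A : Type*} [CommRing A] (ν : A → EReal) (d : ℝ) (g : Polynomial A) : EReal :=
  ⨅ i : ℕ, (ν (g.coeff i) - (((i : ℝ) * d : ℝ) : EReal))

/-- The induced pseudovaluation on the localization `A_f`: the quotient of `polyPV ν d`
under the map `A[X] → A_f`, `X ↦ f⁻¹`. -/
def locPV {A : Type*} [CommRing A] (ν : A → EReal) (f : A) (d : ℝ)
    (z : Localization.Away f) : EReal :=
  ⨆ (g : Polynomial A)
    (_ : Polynomial.aeval (IsLocalization.Away.invSelf (S := Localization.Away f) f) g = z),
    polyPV ν d g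

/-- The Gauss norm `γ_ε(α) = inf_i { i + ε p^{-i} ν(a_i) }` of a Witt vector. -/
def gaussNorm (p : ℕ) {A : Type*} [CommRing A] (ν : A → EReal) (ε : ℝ)
    (α : WittVector p A) : EReal :=
  ⨅ i : ℕ, ((i : EReal) + ((ε * (p : ℝ) ^ (-(i : ℤ)) : ℝ) : EReal) * ν (α.coeff i))

/-- A Witt vector is overconvergent if `γ_ε(α) ≠ -∞` for some `ε > 0`. -/
def IsOverconvergent (p : ℕ) {A : Type*} [CommRing A] (ν : A → EReal)
    (α : WittVector p A) : Prop :=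
  ∃ ε : ℝ, 0 < ε ∧ gaussNorm p ν ε α ≠ ⊥

/-- The trivial valuation on an integral domain: `ν 0 = ∞` and `ν a = 0` for `a ≠ 0`. -/
def trivialPV (K : Type*) [Zero K] : K → EReal :=
  fun a => if a = 0 then (⊤ : EReal) else 0

lemma EReal.exists_nonneg_forall_neg_le {ι : Type*} [Finite ι] {v : ι → EReal}
    (hv : ∀ i, v i ≠ ⊥) : ∃ E : ℝ, 0 ≤ E ∧ ∀ i, ((-E : ℝ) : EReal) ≤ v i := by
  cases isEmpty_or_nonempty ι
  · exact ⟨0, le_rfl, isEmptyElim⟩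
  obtain ⟨i₀, hi₀⟩ := Finite.exists_min v
  obtain ⟨r, -, hr⟩ := EReal.lt_iff_exists_real_btwn.mp (bot_lt_iff_ne_bot.mpr (hv i₀))
  refine ⟨|r|, abs_nonneg r, fun i => le_trans ?_ (hr.le.trans (hi₀ i))⟩
  exact EReal.coe_le_coe_iff.mpr (neg_abs_le r)

lemma EReal.real_mul_sub_le_iff {C O : ℝ} (hC : 0 < C) {x y : EReal} :
    (C : EReal) * x - O ≤ y ↔ x ≤ (y + O) / C := by
  rw [EReal.sub_le_iff_le_add (.inl (EReal.coe_ne_bot O)) (.inl (EReal.coe_ne_top O)),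
    EReal.le_div_iff_mul_le (EReal.coe_pos.mpr hC) (EReal.coe_ne_top C), mul_comm]

lemma EReal.sub_coe_ne_bot {x : EReal} (hx : x ≠ ⊥) (r : ℝ) : x - r ≠ ⊥ := by
  rw [sub_eq_add_neg, ← EReal.coe_neg]
  exact EReal.add_ne_bot_iff.mpr ⟨hx, EReal.coe_ne_bot _⟩

lemma le_apply_sum {M ι : Type*} [AddCommMonoid M] {w : M → EReal} (hw₀ : w 0 = ⊤)
    (hw : ∀ x y, min (w x) (w y) ≤ w (x + y)) (s : Finset ι) (f : ι → M) {c : EReal}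
    (hf : ∀ i ∈ s, c ≤ w (f i)) : c ≤ w (∑ i ∈ s, f i) := by
  classical
  induction s using Finset.induction_on with
  | empty => simp [hw₀]
  | insert i s hi ih =>
    rw [Finset.sum_insert hi]
    exact (le_min (hf i (s.mem_insert_self i))
      (ih fun j hj => hf j (Finset.mem_insert_of_mem hj))).trans (hw _ _)

lemma neg_le_apply_prod {M ι : Type*} [CommMonoid M] {w : M → EReal} {B E : ℝ}
    (hw₁ : ((-B : ℝ) : EReal) ≤ w 1) (hw : ∀ x y, w x + w y - E ≤ w (x * y))
    (s : Finset ι) (f : ι → M) (c : ι → ℝ) (hf : ∀ i ∈ s, ((-c i : ℝ) : EReal) ≤ w (f i)) :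
    ((-(B + ∑ i ∈ s, (c i + E)) : ℝ) : EReal) ≤ w (∏ i ∈ s, f i) := by
  classical
  induction s using Finset.induction_on with
  | empty => simpa using hw₁
  | insert i s hi ih =>
    rw [Finset.prod_insert hi, Finset.sum_insert hi]
    refine le_trans ?_ (hw _ _)
    calc ((-(B + (c i + E + ∑ j ∈ s, (c j + E))) : ℝ) : EReal)
        = ((-c i : ℝ) : EReal) + ((-(B + ∑ j ∈ s, (c j + E)) : ℝ) : EReal) - E := by
          norm_cast; ring_nf
      _ ≤ w (f i) + w (∏ j ∈ s, f j) - E :=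
          EReal.sub_le_sub (add_le_add (hf i (s.mem_insert_self i))
            (ih fun j hj => hf j (Finset.mem_insert_of_mem hj))) le_rfl

lemma neg_le_apply_pow {M : Type*} [CommMonoid M] {w : M → EReal} {B E c : ℝ}
    (hw₁ : ((-B : ℝ) : EReal) ≤ w 1) (hw : ∀ x y, w x + w y - E ≤ w (x * y)) {x : M}
    (hx : ((-c : ℝ) : EReal) ≤ w x) (k : ℕ) :
    ((-(B + k * (c + E)) : ℝ) : EReal) ≤ w (x ^ k) := by
  have h := neg_le_apply_prod hw₁ hw (Finset.range k) (fun _ => x) (fun _ => c)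
    fun _ _ => hx
  rwa [Finset.prod_const, Finset.sum_const, Finset.card_range, nsmul_eq_mul] at h

lemma IsNegativePV.isProperPV {A : Type*} [CommRing A] {ν : A → EReal} (hν : IsNegativePV ν) :
    IsProperPV ν :=
  ⟨hν.1, hν.2.1⟩

namespace IsPseudovaluation

variable {A : Type*} [CommRing A] {ν : A → EReal}

lemma le_neg (hν : IsPseudovaluation ν) (a : A) : ν a ≤ ν (-a) := by
  simpa [hν.map_zero] using hν.min_le_sub 0 a

lemma min_le_add (hν : IsPseudovaluation ν) (a b : A) : min (ν a) (ν b) ≤ ν (a + b) := by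
  simpa using (min_le_min le_rfl (hν.le_neg b)).trans (hν.min_le_sub a (-b))

end IsPseudovaluation

lemma IsNegativePV.exists_eq_coe_nonpos {A : Type*} [CommRing A] {ν : A → EReal}
    (hν : IsNegativePV ν) {a : A} (ha : a ≠ 0) : ∃ u : ℝ, u ≤ 0 ∧ ν a = u := by
  have hle := hν.2.2 a ha
  lift ν a to ℝ using ⟨ne_top_of_le_ne_top EReal.zero_ne_top hle, hν.2.1 a⟩ with u
  exact ⟨u, EReal.coe_nonpos.mp hle, rfl⟩

section BasisOrder

variable {R M ι : Type*} [CommRing R] [AddCommGroup M] [Module R M] {μ : R → EReal}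

/-- The `μⁿ` of the statement, with the isomorphism `φ` replaced by a basis. -/
def basisOrder (μ : R → EReal) (b : Module.Basis ι R M) (x : M) : EReal :=
  ⨅ i, μ (b.repr x i)

lemma basisOrder_le (μ : R → EReal) (b : Module.Basis ι R M) (x : M) (i : ι) :
    basisOrder μ b x ≤ μ (b.repr x i) :=
  iInf_le _ i

lemma basisOrder_zero (hμ : IsPseudovaluation μ) (b : Module.Basis ι R M) :
    basisOrder μ b 0 = ⊤ := by
  simp [basisOrder, hμ.map_zero]

lemma min_le_basisOrder_add (hμ : IsPseudovaluation μ) (b : Module.Basis ι R M) (x y : M) :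
    min (basisOrder μ b x) (basisOrder μ b y) ≤ basisOrder μ b (x + y) :=
  le_iInf fun i => by
    simpa using (min_le_min (basisOrder_le μ b x i) (basisOrder_le μ b y i)).trans
      (hμ.min_le_add _ _)

lemma add_le_basisOrder_smul (hμ : IsProperPV μ) (b : Module.Basis ι R M) (r : R) (x : M) :
    μ r + basisOrder μ b x ≤ basisOrder μ b (r • x) :=
  le_iInf fun i => by
    simpa using (add_le_add le_rfl (basisOrder_le μ b x i)).trans
      (hμ.1.add_le_mul r _ (hμ.2 r) (hμ.2 _))

lemma basisOrder_ne_bot [Finite ι] (hμ : IsProperPV μ) (b : Module.Basis ι R M) (x : M) :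
    basisOrder μ b x ≠ ⊥ := by
  obtain ⟨E, -, hE⟩ := EReal.exists_nonneg_forall_neg_le fun i => hμ.2 (b.repr x i)
  exact ne_bot_of_le_ne_bot (EReal.coe_ne_bot _) (le_iInf hE)

lemma le_basisOrder_sum (hμ : IsPseudovaluation μ) (b : Module.Basis ι R M) {κ : Type*}
    (s : Finset κ) (f : κ → M) {c : EReal} (hf : ∀ i ∈ s, c ≤ basisOrder μ b (f i)) :
    c ≤ basisOrder μ b (∑ i ∈ s, f i) :=
  le_apply_sum (basisOrder_zero hμ b) (min_le_basisOrder_add hμ b) s f hf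

/-- The constant is a lower bound of `μⁿ` on the products `b i * b j`. -/
lemma exists_basisOrder_mul {A : Type*} [CommRing A] [Algebra R A] [Fintype ι]
    (hμ : IsProperPV μ) (b : Module.Basis ι R A) :
    ∃ E : ℝ, 0 ≤ E ∧ ∀ x y, basisOrder μ b x + basisOrder μ b y - E ≤ basisOrder μ b (x * y) := by
  obtain ⟨E, hE0, hE⟩ := EReal.exists_nonneg_forall_neg_le
    fun ij : ι × ι => basisOrder_ne_bot hμ b (b ij.1 * b ij.2)
  refine ⟨E, hE0, fun x y => ?_⟩
  have hxy : x * y = ∑ i, ∑ j, (b.repr x i * b.repr y j) • (b i * b j) := by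
    conv_lhs => rw [← b.sum_repr x, ← b.sum_repr y]
    simp_rw [Finset.sum_mul_sum, smul_mul_smul_comm]
  rw [hxy]
  refine le_basisOrder_sum hμ.1 b _ _ fun i _ => le_basisOrder_sum hμ.1 b _ _ fun j _ => ?_
  calc basisOrder μ b x + basisOrder μ b y - E
      ≤ μ (b.repr x i) + μ (b.repr y j) + ((-E : ℝ) : EReal) := by
        rw [EReal.coe_neg, ← sub_eq_add_neg]
        exact EReal.sub_le_sub (add_le_add (basisOrder_le μ b x i) (basisOrder_le μ b y j)) le_rfl
    _ ≤ μ (b.repr x i * b.repr y j) + basisOrder μ b (b i * b j) :=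
        add_le_add (hμ.1.add_le_mul _ _ (hμ.2 _) (hμ.2 _)) (hE (i, j))
    _ ≤ _ := add_le_basisOrder_smul hμ b _ _

end BasisOrder

section WeightedDegree

variable {R : Type*} [CommRing R] {μ : R → EReal} {m : ℕ} {d : Fin m → ℝ}

lemma weightedDegPV_le (μ : R → EReal) (d : Fin m → ℝ) (p : MvPolynomial (Fin m) R)
    (k : Fin m →₀ ℕ) :
    weightedDegPV μ d p ≤ μ (p.coeff k) - ((∑ j, (k j : ℝ) * d j : ℝ) : EReal) :=
  iInf_le _ k

lemma weightedDegPV_zero (hμ : IsPseudovaluation μ) : weightedDegPV μ d 0 = ⊤ := by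
  simp [weightedDegPV, hμ.map_zero]

lemma min_le_weightedDegPV_add (hμ : IsPseudovaluation μ) (p q : MvPolynomial (Fin m) R) :
    min (weightedDegPV μ d p) (weightedDegPV μ d q) ≤ weightedDegPV μ d (p + q) :=
  le_iInf fun k => by
    rw [MvPolynomial.coeff_add]
    refine (min_le_min (weightedDegPV_le μ d p k) (weightedDegPV_le μ d q k)).trans ?_
    rcases le_total (μ (p.coeff k)) (μ (q.coeff k)) with h | h
    · exact (min_le_left _ _).trans
        (EReal.sub_le_sub ((min_eq_left h).ge.trans (hμ.min_le_add _ _)) le_rfl)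
    · exact (min_le_right _ _).trans
        (EReal.sub_le_sub ((min_eq_right h).ge.trans (hμ.min_le_add _ _)) le_rfl)

lemma add_le_weightedDegPV_smul (hμ : IsProperPV μ) (r : R) (p : MvPolynomial (Fin m) R) :
    μ r + weightedDegPV μ d p ≤ weightedDegPV μ d (r • p) :=
  le_iInf fun k => by
    rw [MvPolynomial.coeff_smul, smul_eq_mul]
    calc μ r + weightedDegPV μ d p
        ≤ μ r + (μ (p.coeff k) - ((∑ j, (k j : ℝ) * d j : ℝ) : EReal)) :=
          add_le_add le_rfl (weightedDegPV_le μ d p k)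
      _ = μ r + μ (p.coeff k) - ((∑ j, (k j : ℝ) * d j : ℝ) : EReal) := (add_sub_assoc ..).symm
      _ ≤ _ := EReal.sub_le_sub (hμ.1.add_le_mul _ _ (hμ.2 _) (hμ.2 _)) le_rfl

lemma weightedDegPV_ne_bot (hμ : IsProperPV μ) (p : MvPolynomial (Fin m) R) :
    weightedDegPV μ d p ≠ ⊥ := by
  obtain ⟨E, -, hE⟩ := EReal.exists_nonneg_forall_neg_le fun k : p.support =>
    EReal.sub_coe_ne_bot (hμ.2 (p.coeff k)) (∑ j, (k.1 j : ℝ) * d j)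
  refine ne_bot_of_le_ne_bot (EReal.coe_ne_bot (-E)) (le_iInf fun k => ?_)
  by_cases hk : k ∈ p.support
  · exact hE ⟨k, hk⟩
  · simp [MvPolynomial.notMem_support_iff.mp hk, hμ.1.map_zero]

end WeightedDegree

lemma exists_one_le_forall_le_mul {ι : Type*} [Fintype ι] {d : ι → ℝ} (hd : ∀ i, 0 < d i)
    {M : ℝ} (hM : 0 ≤ M) : ∃ C : ℝ, 1 ≤ C ∧ ∀ i, M ≤ C * d i := by
  have hterm : ∀ i, 0 ≤ M / d i := fun i => div_nonneg hM (hd i).le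
  have hsum : 0 ≤ ∑ i, M / d i := Finset.sum_nonneg fun i _ => hterm i
  refine ⟨1 + ∑ i, M / d i, by linarith, fun i => ?_⟩
  calc M = M / d i * d i := (div_mul_cancel₀ M (hd i).ne').symm
    _ ≤ (1 + ∑ i, M / d i) * d i := by
        gcongr
        · exact (hd i).le
        · linarith [Finset.single_le_sum (fun i _ => hterm i) (Finset.mem_univ i)]

section Monomials

variable {R A : Type*} [CommRing R] [CommRing A] [Algebra R A] {m : ℕ}

lemma neg_le_apply_monomial {w : A → EReal} {E : ℝ} (hw₁ : ((-E : ℝ) : EReal) ≤ w 1)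
    (hw : ∀ x y, w x + w y - E ≤ w (x * y)) (π : MvPolynomial (Fin m) R →ₐ[R] A)
    (hX : ∀ j, ((-E : ℝ) : EReal) ≤ w (π (MvPolynomial.X j))) (k : Fin m →₀ ℕ) :
    ((-(E * (2 * m + 1) + 2 * E * ∑ j, (k j : ℝ)) : ℝ) : EReal)
      ≤ w (π (MvPolynomial.monomial k 1)) := by
  have hmono : π (MvPolynomial.monomial k 1) = ∏ j, π (MvPolynomial.X j) ^ k j := by
    rw [MvPolynomial.monomial_eq, Finsupp.prod_fintype _ _ fun _ => pow_zero _]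
    simp
  have h := neg_le_apply_prod hw₁ hw Finset.univ _ _
    fun j _ => neg_le_apply_pow hw₁ hw (hX j) (k j)
  convert h using 3
  simp only [Finset.sum_add_distrib, ← Finset.sum_mul, Finset.sum_const, Finset.card_univ,
    Fintype.card_fin, nsmul_eq_mul]
  ring

variable {ι : Type*} [Fintype ι] {μ : R → EReal}

lemma exists_neg_le_basisOrder_monomial (hμ : IsProperPV μ) (b : Module.Basis ι R A)
    (π : MvPolynomial (Fin m) R →ₐ[R] A) :
    ∃ O M : ℝ, 0 ≤ O ∧ 0 ≤ M ∧ ∀ k : Fin m →₀ ℕ,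
      ((-(O + M * ∑ j, (k j : ℝ)) : ℝ) : EReal)
        ≤ basisOrder μ b (π (MvPolynomial.monomial k 1)) := by
  obtain ⟨E₁, hE₁, hmul⟩ := exists_basisOrder_mul hμ b
  obtain ⟨E₂, hE₂, hgen⟩ := EReal.exists_nonneg_forall_neg_le
    fun j : Option (Fin m) => basisOrder_ne_bot hμ b (j.elim 1 fun j => π (MvPolynomial.X j))
  have hE : ((-(E₁ + E₂) : ℝ) : EReal) ≤ ((-E₂ : ℝ) : EReal) :=
    EReal.coe_le_coe_iff.mpr (by linarith)
  refine ⟨(E₁ + E₂) * (2 * m + 1), 2 * (E₁ + E₂), by positivity, by positivity,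
    neg_le_apply_monomial (hE.trans (hgen none)) (fun x y => ?_) π
      (fun j => hE.trans (hgen (some j)))⟩
  exact (EReal.sub_le_sub le_rfl (EReal.coe_le_coe_iff.mpr (by linarith))).trans (hmul x y)

end Monomials

section Comparison

variable {R : Type*} [CommRing R] {μ : R → EReal} {m : ℕ} {ι : Type*} [Fintype ι]

/-- The constant bounds `weightedDegPV` below on chosen lifts of the basis vectors. -/
lemma exists_basisOrder_sub_le_iSup_weightedDegPV {M : Type*} [AddCommGroup M] [Module R M]
    (hμ : IsProperPV μ) (b : Module.Basis ι R M) (π : MvPolynomial (Fin m) R →ₗ[R] M)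
    (hπ : Function.Surjective π) (d : Fin m → ℝ) :
    ∃ K : ℝ, 0 ≤ K ∧ ∀ a : M,
      basisOrder μ b a - K ≤ ⨆ (f : MvPolynomial (Fin m) R) (_ : π f = a), weightedDegPV μ d f := by
  choose g hg using fun i => hπ (b i)
  obtain ⟨K, hK0, hK⟩ := EReal.exists_nonneg_forall_neg_le fun i =>
    weightedDegPV_ne_bot (d := d) hμ (g i)
  refine ⟨K, hK0, fun a => ?_⟩
  have hlift : π (∑ i, b.repr a i • g i) = a := by
    simp only [map_sum, map_smul, hg, b.sum_repr]
  refine le_iSup₂_of_le _ hlift <| le_apply_sum (weightedDegPV_zero hμ.1)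
    (min_le_weightedDegPV_add hμ.1) _ _ fun i _ => ?_
  calc basisOrder μ b a - K = basisOrder μ b a + ((-K : ℝ) : EReal) := by
        rw [EReal.coe_neg, sub_eq_add_neg]
    _ ≤ μ (b.repr a i) + weightedDegPV μ d (g i) := add_le_add (basisOrder_le μ b a i) (hK i)
    _ ≤ _ := add_le_weightedDegPV_smul hμ _ _

variable {A : Type*} [CommRing A] [Algebra R A] {d : Fin m → ℝ}

lemma exists_mul_weightedDegPV_sub_le_basisOrder (hμ : IsNegativePV μ) (b : Module.Basis ι R A)
    (π : MvPolynomial (Fin m) R →ₐ[R] A) (hd : ∀ j, 0 < d j) :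
    ∃ C O : ℝ, 0 < C ∧ 0 ≤ O ∧ ∀ p, C * weightedDegPV μ d p - O ≤ basisOrder μ b (π p) := by
  obtain ⟨O, M, hO, hM, hmon⟩ := exists_neg_le_basisOrder_monomial hμ.isProperPV b π
  obtain ⟨C, hC1, hCd⟩ := exists_one_le_forall_le_mul hd hM
  refine ⟨C, O, by linarith, hO, fun p => ?_⟩
  conv_rhs => rw [← MvPolynomial.support_sum_monomial_coeff p, map_sum]
  refine le_basisOrder_sum hμ.1 b _ _ fun k hk => ?_
  obtain ⟨u, hu0, hu⟩ := hμ.exists_eq_coe_nonpos (MvPolynomial.mem_support_iff.mp hk)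
  have hMC : M * ∑ j, (k j : ℝ) ≤ C * ∑ j, (k j : ℝ) * d j := by
    rw [Finset.mul_sum, Finset.mul_sum]
    exact Finset.sum_le_sum fun j _ => by nlinarith [hCd j, (k j).cast_nonneg (α := ℝ)]
  calc (C : EReal) * weightedDegPV μ d p - O
      ≤ C * (μ (p.coeff k) - ((∑ j, (k j : ℝ) * d j : ℝ) : EReal)) - O :=
        EReal.sub_le_sub (mul_le_mul_of_nonneg_left (weightedDegPV_le μ d p k)
          (EReal.coe_nonneg.mpr (by linarith))) le_rfl
    _ ≤ μ (p.coeff k) + ((-(O + M * ∑ j, (k j : ℝ)) : ℝ) : EReal) := by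
        rw [hu]
        exact_mod_cast (show C * (u - ∑ j, (k j : ℝ) * d j) - O ≤ u + -(O + M * ∑ j, (k j : ℝ))
          by nlinarith)
    _ ≤ μ (p.coeff k) + basisOrder μ b (π (MvPolynomial.monomial k 1)) :=
        add_le_add le_rfl (hmon k)
    _ ≤ basisOrder μ b (π (MvPolynomial.monomial k (p.coeff k))) := by
        have hsmul : MvPolynomial.monomial k (p.coeff k)
            = p.coeff k • MvPolynomial.monomial k 1 := by
          rw [MvPolynomial.smul_monomial, smul_eq_mul, mul_one]
        rw [hsmul, map_smul]
        exact add_le_basisOrder_smul hμ.isProperPV b _ _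

end Comparison

/-- If `A` is an `R`-algebra, free of rank `n` as an `R`-module (via an
isomorphism `φ : Rⁿ ≅ A`), and `τ` is an admissible pseudovaluation on `A`, then `τ`
is linearly equivalent to the transport `μⁿ` of the order function
`(a₁, …, aₙ) ↦ min_i μ(a_i)` along `φ`. -/
theorem statement3 (R A : Type*) [CommRing R] [CommRing A] [Algebra R A]
    (μ : R → EReal) (hμ : IsNegativePV μ)
    (n : ℕ) (φ : (Fin n → R) ≃ₗ[R] A)
    (τ : A → EReal) (hτ : IsAdmissiblePV μ τ) :
    LinearlyEquivalent τ (fun a : A => ⨅ i : Fin n, μ (φ.symm a i)) := by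
  obtain ⟨m, π, d, hπ, hd, hτ⟩ := hτ
  let b := Module.Basis.ofEquivFun φ.symm
  have hb : (fun a : A => ⨅ i : Fin n, μ (φ.symm a i)) = basisOrder μ b := by
    funext a
    simp [basisOrder, b, Module.Basis.ofEquivFun_repr_apply]
  rw [hb]
  obtain ⟨K, hK, hlower⟩ := exists_basisOrder_sub_le_iSup_weightedDegPV hμ.isProperPV b
    π.toLinearMap hπ d
  obtain ⟨C, O, hC, hO, hupper⟩ := exists_mul_weightedDegPV_sub_le_basisOrder hμ b π hd
  refine ⟨C, 1, O, K, hC, one_pos, hO, hK, fun a => ?_, fun a => ?_⟩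
  · rw [EReal.coe_one, one_mul, hτ]
    exact hlower a
  · rw [hτ, EReal.real_mul_sub_le_iff hC]
    exact iSup₂_le fun p hp => (EReal.real_mul_sub_le_iff hC).mp (hp ▸ hupper p)
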